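/- arXiv:1508.00840 — 3 statements merged into one kernel-verified Lean document; each statement's English description precedes it below -/
import Mathlib

section
/- A priori sup bound via the maximum principle (paper equation (3)): let ε > 0, σ > 0, κ ≥ 0, and let u be C² on K₀, continuous on the closure of K₀, and solve the (ε,σ,κ)-Dirichlet problem on K₀ (K₀ having compact closure). Then 0 ≤ u(x) ≤ κ/(σε) for every x in the closure of K₀. -/
open scoped BigOperators RealInnerProductSpace

/-- Divergence of a vector field on Euclidean space. -/
noncomputable def vdiv {n : ℕ} (F : EuclideanSpace ℝ (Fin n) → EuclideanSpace ℝ (Fin n))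
    (x : EuclideanSpace ℝ (Fin n)) : ℝ :=
  ∑ i, fderiv ℝ F x (EuclideanSpace.single i 1) i

/-- The regularized level set operator
`Q_{ε,σ,κ}[w] = div(Dw/√(ε²+|Dw|²)) + κ/√(ε²+|Dw|²) − σw`. -/
noncomputable def Qop {n : ℕ} (ε σ κ : ℝ) (w : EuclideanSpace ℝ (Fin n) → ℝ)
    (x : EuclideanSpace ℝ (Fin n)) : ℝ :=
  vdiv (fun y => (Real.sqrt (ε ^ 2 + ‖gradient w y‖ ^ 2))⁻¹ • gradient w y) x
    + κ / Real.sqrt (ε ^ 2 + ‖gradient w x‖ ^ 2) - σ * w x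

/-- `u` solves the (ε,σ,κ)-Dirichlet problem on `K`:
`Q_{ε,σ,κ}[u] = 0` in `K` and `u = 0` on `∂K`. -/
def SolvesDirichlet {n : ℕ} (ε σ κ : ℝ) (K : Set (EuclideanSpace ℝ (Fin n)))
    (u : EuclideanSpace ℝ (Fin n) → ℝ) : Prop :=
  (∀ x ∈ K, Qop ε σ κ u x = 0) ∧ ∀ x ∈ frontier K, u x = 0

/-! At an interior extremum of `u` the gradient vanishes, so `Q_{ε,σ,κ}[u] = 0` reduces there
to `σ u = (Δu + κ) / ε`. At a maximum `Δu ≤ 0`, giving `u ≤ κ / (σ ε)`; at a minimum `Δu ≥ 0`,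
giving `u ≥ κ / (σ ε) ≥ 0`. Since `u` vanishes on `frontier K` and attains its extrema on the
compact set `closure K`, both bounds hold everywhere. -/

open Filter Topology

theorem IsLocalMin.deriv_deriv_nonneg {f : ℝ → ℝ} {a : ℝ} (h : IsLocalMin f a)
    (hf : ContinuousAt f a) : 0 ≤ deriv (deriv f) a := by
  by_contra! hneg
  -- The second-derivative test would make `a` a local maximum too, so `f` is locally constant.
  have hconst : f =ᶠ[𝓝 a] fun _ => f a := by
    filter_upwards [h, isLocalMax_of_deriv_deriv_neg hneg h.deriv_eq_zero hf] with x hmin hmax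
    exact le_antisymm hmax hmin
  have hzero : deriv (deriv f) a = 0 := by simpa using hconst.deriv.deriv_eq
  exact hneg.ne hzero

theorem IsLocalMax.deriv_deriv_nonpos {f : ℝ → ℝ} {a : ℝ} (h : IsLocalMax f a)
    (hf : ContinuousAt f a) : deriv (deriv f) a ≤ 0 := by
  simpa [deriv.neg'] using h.neg.deriv_deriv_nonneg hf.neg

section Hessian

variable {E : Type*} [NormedAddCommGroup E] [NormedSpace ℝ E] {u : E → ℝ} {x : E}

theorem ContDiffAt.eventually_differentiableAt {F : Type*} [NormedAddCommGroup F]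
    [NormedSpace ℝ F] {f : E → F} {a : E} (h : ContDiffAt ℝ 2 f a) :
    ∀ᶠ y in 𝓝 a, DifferentiableAt ℝ f y :=
  (h.eventually (by simp)).mono fun _ hy => hy.differentiableAt (by norm_num)

theorem ContDiffAt.differentiableAt_fderiv {F : Type*} [NormedAddCommGroup F]
    [NormedSpace ℝ F] {f : E → F} {a : E} (h : ContDiffAt ℝ 2 f a) :
    DifferentiableAt ℝ (fderiv ℝ f) a :=
  (h.fderiv_right (m := 1) (by norm_num)).differentiableAt one_ne_zero

theorem deriv_deriv_comp_add_smul (hu : ∀ᶠ y in 𝓝 x, DifferentiableAt ℝ u y)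
    (hu' : DifferentiableAt ℝ (fderiv ℝ u) x) (v : E) :
    deriv (deriv fun t : ℝ => u (x + t • v)) 0 = fderiv ℝ (fderiv ℝ u) x v v := by
  have hline (t : ℝ) : HasDerivAt (fun t : ℝ => x + t • v) v t := by
    simpa using ((hasDerivAt_id t).smul_const v).const_add x
  have hcont : Tendsto (fun t : ℝ => x + t • v) (𝓝 0) (𝓝 x) := by
    simpa using (hline 0).continuousAt.tendsto
  have hderiv : deriv (fun t : ℝ => u (x + t • v)) =ᶠ[𝓝 0]
      fun t => fderiv ℝ u (x + t • v) v := by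
    filter_upwards [hcont.eventually hu] with t ht
    exact (ht.hasFDerivAt.comp_hasDerivAt t (hline t)).deriv
  have hu'0 : HasFDerivAt (fderiv ℝ u) (fderiv ℝ (fderiv ℝ u) x) (x + (0 : ℝ) • v) := by
    rw [zero_smul, add_zero]; exact hu'.hasFDerivAt
  have hcomp : HasDerivAt (fun t : ℝ => fderiv ℝ u (x + t • v)) (fderiv ℝ (fderiv ℝ u) x v) 0 :=
    hu'0.comp_hasDerivAt (0 : ℝ) (hline 0)
  have hsecond : HasDerivAt (fun t : ℝ => fderiv ℝ u (x + t • v) v)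
      (fderiv ℝ (fderiv ℝ u) x v v) 0 := by
    simpa using hcomp.clm_apply (hasDerivAt_const (0 : ℝ) v)
  rw [hderiv.deriv_eq, hsecond.deriv]

theorem IsLocalMin.fderiv_fderiv_apply_self_nonneg (h : IsLocalMin u x)
    (hu : ∀ᶠ y in 𝓝 x, DifferentiableAt ℝ u y) (hu' : DifferentiableAt ℝ (fderiv ℝ u) x)
    (v : E) : 0 ≤ fderiv ℝ (fderiv ℝ u) x v v := by
  have hline : ContinuousAt (fun t : ℝ => x + t • v) 0 := by fun_prop
  have hx : x + (0 : ℝ) • v = x := by rw [zero_smul, add_zero]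
  rw [← deriv_deriv_comp_add_smul hu hu' v]
  refine IsLocalMin.deriv_deriv_nonneg ?_ ?_
  · exact IsLocalMin.comp_continuous (g := fun t : ℝ => x + t • v) (by rwa [hx]) hline
  · exact ContinuousAt.comp (g := u) (by rw [hx]; exact hu.self_of_nhds.continuousAt) hline

theorem IsLocalMax.fderiv_fderiv_apply_self_nonpos (h : IsLocalMax u x)
    (hu : ∀ᶠ y in 𝓝 x, DifferentiableAt ℝ u y) (hu' : DifferentiableAt ℝ (fderiv ℝ u) x)
    (v : E) : fderiv ℝ (fderiv ℝ u) x v v ≤ 0 := by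
  have hneg : fderiv ℝ (fun y => -u y) = fun y => -fderiv ℝ u y := funext fun y => fderiv_neg
  have := h.neg.fderiv_fderiv_apply_self_nonneg (hu.mono fun y hy => hy.neg)
    (by rw [hneg]; exact hu'.neg) v
  simpa [hneg, fderiv_neg] using this

end Hessian

section Divergence

variable {n : ℕ} {x : EuclideanSpace ℝ (Fin n)}

theorem toDual_symm_apply_single {ι : Type*} [Fintype ι] [DecidableEq ι]
    (ℓ : StrongDual ℝ (EuclideanSpace ℝ ι)) (i : ι) :
    (InnerProductSpace.toDual ℝ (EuclideanSpace ℝ ι)).symm ℓ i =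
      ℓ (EuclideanSpace.single i 1) := by
  rw [← InnerProductSpace.toDual_symm_apply (𝕜 := ℝ), EuclideanSpace.inner_single_right]
  simp

theorem vdiv_gradient (u : EuclideanSpace ℝ (Fin n) → ℝ) :
    vdiv (gradient u) x = ∑ i, fderiv ℝ (fderiv ℝ u) x (EuclideanSpace.single i 1)
      (EuclideanSpace.single i 1) := by
  have hgrad : fderiv ℝ (gradient u) x = _ :=
    (InnerProductSpace.toDual ℝ (EuclideanSpace ℝ (Fin n))).symm.comp_fderiv (f := fderiv ℝ u)
  simp only [vdiv, hgrad]
  exact Finset.sum_congr rfl fun i _ => toDual_symm_apply_single _ i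

theorem vdiv_smul_of_eq_zero {φ : EuclideanSpace ℝ (Fin n) → ℝ}
    {F : EuclideanSpace ℝ (Fin n) → EuclideanSpace ℝ (Fin n)}
    (hφ : DifferentiableAt ℝ φ x) (hF : DifferentiableAt ℝ F x) (hFx : F x = 0) :
    vdiv (fun y => φ y • F y) x = φ x * vdiv F x := by
  simp [vdiv, fderiv_fun_smul hφ hF, hFx, Finset.mul_sum]

theorem Qop_eq_of_fderiv_eq_zero {ε : ℝ} (σ κ : ℝ) (hε : 0 < ε)
    {u : EuclideanSpace ℝ (Fin n) → ℝ} (hu : DifferentiableAt ℝ (fderiv ℝ u) x)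
    (hx : fderiv ℝ u x = 0) :
    Qop ε σ κ u x = ε⁻¹ * vdiv (gradient u) x + κ / ε - σ * u x := by
  have hgrad : DifferentiableAt ℝ (gradient u) x :=
    (InnerProductSpace.toDual ℝ (EuclideanSpace ℝ (Fin n))).symm.differentiableAt.comp x hu
  have hgradx : gradient u x = 0 := by simp [gradient, hx]
  have hsqrt : Real.sqrt (ε ^ 2 + ‖gradient u x‖ ^ 2) = ε := by
    rw [hgradx, norm_zero, zero_pow two_ne_zero, add_zero, Real.sqrt_sq hε.le]
  have hpos : ε ^ 2 + ‖gradient u x‖ ^ 2 ≠ 0 := by positivity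
  have hφ : DifferentiableAt ℝ (fun y => (Real.sqrt (ε ^ 2 + ‖gradient u y‖ ^ 2))⁻¹) x :=
    ((hgrad.norm_sq ℝ).const_add _).sqrt hpos |>.inv (by rw [hsqrt]; exact hε.ne')
  rw [Qop, vdiv_smul_of_eq_zero hφ hgrad hgradx, hsqrt]

end Divergence

section MaximumPrinciple

variable {X α : Type*} [TopologicalSpace X] [LinearOrder α] [TopologicalSpace α]
  [OrderClosedTopology α] {K : Set X} {u : X → α} {M : α}

theorem le_of_forall_frontier_le_of_isLocalMax (hK : IsOpen K) (hKc : IsCompact (closure K))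
    (hu : ContinuousOn u (closure K)) (hfr : ∀ x ∈ frontier K, u x ≤ M)
    (hmax : ∀ x ∈ K, IsLocalMax u x → u x ≤ M) : ∀ x ∈ closure K, u x ≤ M := by
  intro x hx
  obtain ⟨z, hz, hzmax⟩ := hKc.exists_isMaxOn ⟨x, hx⟩ hu
  refine (hzmax hx).trans ?_
  by_cases hzK : z ∈ K
  · exact hmax z hzK (hzmax.isLocalMax (mem_of_superset (hK.mem_nhds hzK) subset_closure))
  · exact hfr z (by rw [hK.frontier_eq]; exact ⟨hz, hzK⟩)

theorem ge_of_forall_frontier_ge_of_isLocalMin (hK : IsOpen K) (hKc : IsCompact (closure K))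
    (hu : ContinuousOn u (closure K)) (hfr : ∀ x ∈ frontier K, M ≤ u x)
    (hmin : ∀ x ∈ K, IsLocalMin u x → M ≤ u x) : ∀ x ∈ closure K, M ≤ u x :=
  le_of_forall_frontier_le_of_isLocalMax (α := αᵒᵈ) hK hKc hu hfr hmin

end MaximumPrinciple

section CriticalPoint

variable {n : ℕ} {ε σ κ : ℝ} {u : EuclideanSpace ℝ (Fin n) → ℝ} {x : EuclideanSpace ℝ (Fin n)}

theorem IsLocalMax.le_div_of_Qop_eq_zero (h : IsLocalMax u x) (hu : ContDiffAt ℝ 2 u x)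
    (hε : 0 < ε) (hσ : 0 < σ) (hQ : Qop ε σ κ u x = 0) : u x ≤ κ / (σ * ε) := by
  have hΔ : vdiv (gradient u) x ≤ 0 := by
    rw [vdiv_gradient]
    exact Finset.sum_nonpos fun i _ => h.fderiv_fderiv_apply_self_nonpos
      hu.eventually_differentiableAt hu.differentiableAt_fderiv _
  rw [Qop_eq_of_fderiv_eq_zero σ κ hε hu.differentiableAt_fderiv h.fderiv_eq_zero] at hQ
  rw [le_div_iff₀ (mul_pos hσ hε)]
  field_simp at hQ
  linarith

theorem IsLocalMin.div_le_of_Qop_eq_zero (h : IsLocalMin u x) (hu : ContDiffAt ℝ 2 u x)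
    (hε : 0 < ε) (hσ : 0 < σ) (hQ : Qop ε σ κ u x = 0) : κ / (σ * ε) ≤ u x := by
  have hΔ : 0 ≤ vdiv (gradient u) x := by
    rw [vdiv_gradient]
    exact Finset.sum_nonneg fun i _ => h.fderiv_fderiv_apply_self_nonneg
      hu.eventually_differentiableAt hu.differentiableAt_fderiv _
  rw [Qop_eq_of_fderiv_eq_zero σ κ hε hu.differentiableAt_fderiv h.fderiv_eq_zero] at hQ
  rw [div_le_iff₀ (mul_pos hσ hε)]
  field_simp at hQ
  linarith

end CriticalPoint

theorem sup_bound_double_approximator_general {n : ℕ}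
    (K : Set (EuclideanSpace ℝ (Fin n))) (hK : IsOpen K) (hKc : IsCompact (closure K))
    (ε σ κ : ℝ) (hε : 0 < ε) (hσ : 0 < σ) (hκ : 0 ≤ κ)
    (u : EuclideanSpace ℝ (Fin n) → ℝ)
    (hu2 : ContDiffOn ℝ 2 u K) (huc : ContinuousOn u (closure K))
    (hsol : SolvesDirichlet ε σ κ K u) :
    ∀ x ∈ closure K, 0 ≤ u x ∧ u x ≤ κ / (σ * ε) := by
  obtain ⟨hQ, hfr⟩ := hsol
  have hu (x) (hx : x ∈ K) : ContDiffAt ℝ 2 u x := hu2.contDiffAt (hK.mem_nhds hx)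
  have hbound : 0 ≤ κ / (σ * ε) := by positivity
  intro x hx
  constructor
  · refine ge_of_forall_frontier_ge_of_isLocalMin hK hKc huc (fun y hy => (hfr y hy).ge)
      (fun y hy hmin => hbound.trans ?_) x hx
    exact hmin.div_le_of_Qop_eq_zero (hu y hy) hε hσ (hQ y hy)
  · refine le_of_forall_frontier_le_of_isLocalMax hK hKc huc
      (fun y hy => (hfr y hy).trans_le hbound) (fun y hy hmax => ?_) x hx
    exact hmax.le_div_of_Qop_eq_zero (hu y hy) hε hσ (hQ y hy)

/-- a priori sup bound `0 ≤ u ≤ κ/(σε)` via the maximum principle. -/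
theorem sup_bound_double_approximator {n : ℕ} (hn : 1 ≤ n)
    (K : Set (EuclideanSpace ℝ (Fin n))) (hK : IsOpen K) (hKc : IsCompact (closure K))
    (ε σ κ : ℝ) (hε : 0 < ε) (hσ : 0 < σ) (hκ : 0 ≤ κ)
    (u : EuclideanSpace ℝ (Fin n) → ℝ)
    (hu2 : ContDiffOn ℝ 2 u K) (huc : ContinuousOn u (closure K))
    (hsol : SolvesDirichlet ε σ κ K u) :
    ∀ x ∈ closure K, 0 ≤ u x ∧ u x ≤ κ / (σ * ε) :=
  sup_bound_double_approximator_general K hK hKc ε σ κ hε hσ hκ u hu2 huc hsol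
end

section
/- Monotonicity of the double approximators in σ (used in the proof of Theorem 5.1): let ε > 0, κ ≥ 0, and 0 < σ₁ ≤ σ₂. If u₁ solves the (ε,σ₁,κ)-Dirichlet problem and u₂ solves the (ε,σ₂,κ)-Dirichlet problem on K₀ (both C² on K₀ and continuous on the compact closure of K₀), then u₁(x) ≥ u₂(x) for all x in the closure of K₀. -/
open scoped BigOperators RealInnerProductSpace

/-! Both inequalities come from one comparison principle for `Q = Q_{ε,σ,κ}` with `σ > 0`:
if `Q[u] ≤ Q[v]` in `K` and `v ≤ u` on `∂K`, then `v ≤ u` on the closure. At an interior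
maximum of `v - u` the gradients agree, so the `κ`-terms coincide, and the Hessian of `v - u`
is negative semidefinite; as the linearization of `p ↦ p / √(ε² + |p|²)` is positive definite,
the divergence term of `v` is at most that of `u`, and `-σ w` makes `Q[v] < Q[u]` wherever
`v > u`. Comparing `u₂` with the subsolution `0` (`Q[0] = κ/ε ≥ 0`) gives `u₂ ≥ 0`; hence
`Q_{ε,σ₁,κ}[u₂] = (σ₂ - σ₁) u₂ ≥ 0 = Q_{ε,σ₁,κ}[u₁]`, and comparing `u₂` with `u₁` concludes. -/

open Filter Topology

theorem IsLocalMax.second_deriv_nonpos {g g' : ℝ → ℝ} {a d : ℝ} (hmax : IsLocalMax g a)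
    (hg : ∀ᶠ t in 𝓝 a, HasDerivAt g (g' t) t) (hg' : HasDerivAt g' d a) : d ≤ 0 := by
  by_contra! hd
  have hderiv : deriv g =ᶠ[𝓝 a] g' := hg.mono fun t ht => ht.deriv
  have hd2 : deriv (deriv g) a = d := (hg'.congr_of_eventuallyEq hderiv).deriv
  have hmin : IsLocalMin g a :=
    isLocalMin_of_deriv_deriv_pos (hd2 ▸ hd) hmax.deriv_eq_zero hg.self_of_nhds.continuousAt
  have hconst : g =ᶠ[𝓝 a] fun _ => g a := (hmin.and hmax).mono fun t ht => le_antisymm ht.2 ht.1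
  have : deriv (deriv g) a = 0 := by simp [hconst.deriv.deriv_eq]
  linarith

section InnerProductSpace

variable {F : Type*} [NormedAddCommGroup F] [InnerProductSpace ℝ F]

section Complete

variable [CompleteSpace F]

theorem IsLocalMax.inner_fderiv_gradient_self_nonpos {f : F → ℝ} {x : F} (hmax : IsLocalMax f x)
    (hf : ∀ᶠ y in 𝓝 x, DifferentiableAt ℝ f y) (hgrad : DifferentiableAt ℝ (gradient f) x)
    (v : F) : ⟪v, fderiv ℝ (gradient f) x v⟫ ≤ 0 := by
  have hline : ∀ t : ℝ, HasDerivAt (fun t : ℝ => x + t • v) v t := fun t => by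
    simpa using ((hasDerivAt_id t).smul_const v).const_add x
  have hlim : Tendsto (fun t : ℝ => x + t • v) (𝓝 0) (𝓝 x) := by
    simpa using (hline 0).continuousAt.tendsto
  have hmax' : IsLocalMax f (x + (0 : ℝ) • v) := by simpa using hmax
  refine (hmax'.comp_continuous (g := fun t : ℝ => x + t • v) (hline 0).continuousAt)
    |>.second_deriv_nonpos (g' := fun t => ⟪gradient f (x + t • v), v⟫) ?_ ?_
  · filter_upwards [hlim.eventually hf] with t ht
    have := ht.hasFDerivAt.comp_hasDerivAt t (hline t)
    rwa [← inner_gradient_left] at this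
  · have hgrad' : HasFDerivAt (gradient f) (fderiv ℝ (gradient f) x) (x + (0 : ℝ) • v) := by
      simpa using hgrad.hasFDerivAt
    have := (hgrad'.comp_hasDerivAt 0 (hline 0)).inner ℝ (hasDerivAt_const 0 v)
    simpa [real_inner_comm] using this

theorem ContDiffAt.differentiableAt_gradient {u : F → ℝ} {x : F} (hu : ContDiffAt ℝ 2 u x) :
    DifferentiableAt ℝ (gradient u) x :=
  (InnerProductSpace.toDual ℝ F).symm.toContinuousLinearEquiv.differentiableAt.comp x
    ((hu.fderiv_right (m := 1) (by norm_num)).differentiableAt one_ne_zero)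

theorem gradient_fun_sub {u v : F → ℝ} {x : F} (hv : DifferentiableAt ℝ v x)
    (hu : DifferentiableAt ℝ u x) :
    gradient (fun y => v y - u y) x = gradient v x - gradient u x := by
  simp only [gradient, fderiv_fun_sub hv hu, map_sub]

end Complete

namespace LinearMap

variable [FiniteDimensional ℝ F] {T : F →ₗ[ℝ] F}

theorem trace_nonpos_of_inner_self_nonpos (hT : ∀ v, ⟪v, T v⟫ ≤ 0) : trace ℝ F T ≤ 0 := by
  rw [trace_eq_sum_inner T (stdOrthonormalBasis ℝ F)]
  exact Finset.sum_nonpos fun i _ => hT _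

theorem trace_le_inner_self_of_norm_eq_one (hT : ∀ v, ⟪v, T v⟫ ≤ 0) {e : F} (he : ‖e‖ = 1) :
    trace ℝ F T ≤ ⟪e, T e⟫ := by
  have hon : Orthonormal ℝ ((↑) : ({e} : Set F) → F) := by simpa using he
  obtain ⟨u, b, heu, hb⟩ := hon.exists_orthonormalBasis_extension
  have he' : e ∈ u := heu rfl
  rw [trace_eq_sum_inner T b]
  calc ∑ i, ⟪b i, T (b i)⟫ ≤ ∑ i ∈ {⟨e, he'⟩}, ⟪b i, T (b i)⟫ :=
        Finset.sum_le_sum_of_subset_of_nonpos' (Finset.subset_univ _) fun i _ _ => hT _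
    _ = ⟪e, T e⟫ := by simp [hb]

theorem sq_norm_mul_trace_le_inner (hT : ∀ v, ⟪v, T v⟫ ≤ 0) (p : F) :
    ‖p‖ ^ 2 * trace ℝ F T ≤ ⟪p, T p⟫ := by
  rcases eq_or_ne p 0 with rfl | hp
  · simp
  have hnorm : ‖p‖ ≠ 0 := norm_ne_zero_iff.2 hp
  have := trace_le_inner_self_of_norm_eq_one hT (e := ‖p‖⁻¹ • p) (by simp [norm_smul, hnorm])
  rw [map_smul, real_inner_smul_left, real_inner_smul_right] at this
  calc ‖p‖ ^ 2 * trace ℝ F T ≤ ‖p‖ ^ 2 * (‖p‖⁻¹ * (‖p‖⁻¹ * ⟪p, T p⟫)) := by gcongr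
    _ = ⟪p, T p⟫ := by field_simp

end LinearMap

noncomputable def regNormal (ε : ℝ) (p : F) : F := (√(ε ^ 2 + ‖p‖ ^ 2))⁻¹ • p

noncomputable def regNormalDeriv (ε : ℝ) (p : F) : F →L[ℝ] F :=
  (√(ε ^ 2 + ‖p‖ ^ 2))⁻¹ • ContinuousLinearMap.id ℝ F
    - (√(ε ^ 2 + ‖p‖ ^ 2) ^ 3)⁻¹ • (innerSL ℝ p).smulRight p

theorem hasFDerivAt_regNormal {ε : ℝ} (hε : ε ≠ 0) (p : F) :
    HasFDerivAt (regNormal ε) (regNormalDeriv ε p) p := by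
  have hq : 0 < ε ^ 2 + ‖p‖ ^ 2 := by positivity
  have hs : 0 < √(ε ^ 2 + ‖p‖ ^ 2) := Real.sqrt_pos.2 hq
  have hsqrt := ((hasFDerivAt_id p).norm_sq.const_add (ε ^ 2)).sqrt hq.ne'
  have hinv := (hasDerivAt_inv hs.ne').comp_hasFDerivAt p hsqrt
  refine (hinv.smul (hasFDerivAt_id p)).congr_fderiv ?_
  ext v
  simp only [regNormalDeriv, add_apply, sub_apply, smul_apply, ContinuousLinearMap.comp_id,
    ContinuousLinearMap.id_apply, ContinuousLinearMap.smulRight_apply, coe_innerSL_apply, id_eq,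
    Function.comp_apply, nsmul_eq_mul, smul_eq_mul]
  module

variable [FiniteDimensional ℝ F]

theorem trace_regNormalDeriv_comp_nonpos {ε : ℝ} (hε : ε ≠ 0) (p : F) {H : F →L[ℝ] F}
    (hH : ∀ v, ⟪v, H v⟫ ≤ 0) :
    LinearMap.trace ℝ F ((regNormalDeriv ε p).comp H) ≤ 0 := by
  set s := √(ε ^ 2 + ‖p‖ ^ 2)
  have hs : 0 < s := Real.sqrt_pos.2 (by positivity)
  have hs2 : s ^ 2 = ε ^ 2 + ‖p‖ ^ 2 := Real.sq_sqrt (by positivity)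
  have hcomp : (((regNormalDeriv ε p).comp H : F →L[ℝ] F) : F →ₗ[ℝ] F)
      = s⁻¹ • (H : F →ₗ[ℝ] F) - (s ^ 3)⁻¹ • ((innerₛₗ ℝ p ∘ₗ (H : F →ₗ[ℝ] F)).smulRight p) := by
    ext v
    simp [regNormalDeriv, s]
  have htr := LinearMap.trace_nonpos_of_inner_self_nonpos (T := (H : F →ₗ[ℝ] F)) hH
  have hp := LinearMap.sq_norm_mul_trace_le_inner (T := (H : F →ₗ[ℝ] F)) hH p
  rw [ContinuousLinearMap.coe_coe] at hp
  rw [hcomp, map_sub, map_smul, map_smul, LinearMap.trace_smulRight]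
  calc s⁻¹ * LinearMap.trace ℝ F H - (s ^ 3)⁻¹ * ⟪p, H p⟫
      = (ε ^ 2 * LinearMap.trace ℝ F H + (‖p‖ ^ 2 * LinearMap.trace ℝ F H - ⟪p, H p⟫)) / s ^ 3 := by
        field_simp
        rw [hs2]
        ring
    _ ≤ 0 := div_nonpos_of_nonpos_of_nonneg (by nlinarith [sq_nonneg ε]) (by positivity)

theorem fderiv_regNormal_gradient {ε : ℝ} (hε : ε ≠ 0) {u : F → ℝ} {x : F}
    (hu : ContDiffAt ℝ 2 u x) :
    fderiv ℝ (fun y => regNormal ε (gradient u y)) x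
      = (regNormalDeriv ε (gradient u x)).comp (fderiv ℝ (gradient u) x) :=
  ((hasFDerivAt_regNormal hε _).comp x hu.differentiableAt_gradient.hasFDerivAt).fderiv

theorem trace_fderiv_regNormal_gradient_le_of_isLocalMax {ε : ℝ} (hε : ε ≠ 0) {u v : F → ℝ}
    {x : F} (hu : ContDiffAt ℝ 2 u x) (hv : ContDiffAt ℝ 2 v x)
    (hmax : IsLocalMax (fun y => v y - u y) x) :
    gradient v x = gradient u x ∧
      LinearMap.trace ℝ F (fderiv ℝ (fun y => regNormal ε (gradient v y)) x)
        ≤ LinearMap.trace ℝ F (fderiv ℝ (fun y => regNormal ε (gradient u y)) x) := by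
  have hdu : ∀ᶠ y in 𝓝 x, DifferentiableAt ℝ u y :=
    (hu.eventually (by simp)).mono fun y hy => hy.differentiableAt two_ne_zero
  have hdv : ∀ᶠ y in 𝓝 x, DifferentiableAt ℝ v y :=
    (hv.eventually (by simp)).mono fun y hy => hy.differentiableAt two_ne_zero
  have hsub : gradient (fun y => v y - u y) =ᶠ[𝓝 x] fun y => gradient v y - gradient u y :=
    (hdv.and hdu).mono fun y h => gradient_fun_sub h.1 h.2
  have hgrad : gradient v x = gradient u x := by
    have : gradient (fun y => v y - u y) x = 0 := by simp [gradient, hmax.fderiv_eq_zero]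
    rwa [hsub.self_of_nhds, sub_eq_zero] at this
  have hH := (hv.differentiableAt_gradient.hasFDerivAt.sub
    hu.differentiableAt_gradient.hasFDerivAt).congr_of_eventuallyEq hsub
  have hnsd := hmax.inner_fderiv_gradient_self_nonpos
    ((hdv.and hdu).mono fun y h => h.1.sub h.2) hH.differentiableAt
  rw [hH.fderiv] at hnsd
  refine ⟨hgrad, ?_⟩
  rw [fderiv_regNormal_gradient hε hu, fderiv_regNormal_gradient hε hv, hgrad, ← sub_nonpos,
    ← map_sub, ← ContinuousLinearMap.toLinearMap_sub, ← ContinuousLinearMap.comp_sub]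
  exact trace_regNormalDeriv_comp_nonpos hε _ hnsd

end InnerProductSpace

section Euclidean

variable {n : ℕ}

local notation "E" => EuclideanSpace ℝ (Fin n)

theorem vdiv_eq_trace (G : E → E) (x : E) :
    vdiv G x = LinearMap.trace ℝ E (fderiv ℝ G x) := by
  rw [LinearMap.trace_eq_sum_inner _ (EuclideanSpace.basisFun (Fin n) ℝ), vdiv]
  simp [EuclideanSpace.inner_single_left]

theorem Qop_eq_trace (ε σ κ : ℝ) (w : E → ℝ) (x : E) :
    Qop ε σ κ w x = LinearMap.trace ℝ E (fderiv ℝ (fun y => regNormal ε (gradient w y)) x)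
      + κ / √(ε ^ 2 + ‖gradient w x‖ ^ 2) - σ * w x := by
  rw [Qop, vdiv_eq_trace]
  rfl

theorem Qop_lt_of_isLocalMax {ε σ κ : ℝ} (hε : ε ≠ 0) (hσ : 0 < σ) {u v : E → ℝ} {x : E}
    (hu : ContDiffAt ℝ 2 u x) (hv : ContDiffAt ℝ 2 v x)
    (hmax : IsLocalMax (fun y => v y - u y) x) (hlt : u x < v x) :
    Qop ε σ κ v x < Qop ε σ κ u x := by
  obtain ⟨hgrad, hle⟩ := trace_fderiv_regNormal_gradient_le_of_isLocalMax hε hu hv hmax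
  rw [Qop_eq_trace, Qop_eq_trace, hgrad]
  nlinarith

theorem Qop_zero (ε σ κ : ℝ) (x : E) : Qop ε σ κ (fun _ => 0) x = κ / |ε| := by
  simp [Qop, vdiv, Real.sqrt_sq_eq_abs]

theorem Qop_eq_Qop_add (ε σ σ' κ : ℝ) (w : E → ℝ) (x : E) :
    Qop ε σ κ w x = Qop ε σ' κ w x + (σ' - σ) * w x := by
  simp only [Qop]
  ring

theorem le_on_closure_of_Qop_le {K : Set E} (hK : IsOpen K)
    (hKc : IsCompact (closure K)) {ε σ κ : ℝ} (hε : ε ≠ 0) (hσ : 0 < σ)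
    {u v : E → ℝ} (hu : ContDiffOn ℝ 2 u K) (hv : ContDiffOn ℝ 2 v K)
    (huc : ContinuousOn u (closure K)) (hvc : ContinuousOn v (closure K))
    (hQ : ∀ x ∈ K, Qop ε σ κ u x ≤ Qop ε σ κ v x) (hbd : ∀ x ∈ frontier K, v x ≤ u x) :
    ∀ x ∈ closure K, v x ≤ u x := by
  intro x hx
  by_contra! hlt
  obtain ⟨x₀, hx₀, hmax⟩ := hKc.exists_isMaxOn ⟨x, hx⟩ (hvc.sub huc)
  have hlt₀ : u x₀ < v x₀ := by
    have := isMaxOn_iff.1 hmax x hx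
    simp only [Pi.sub_apply] at this
    linarith
  have hx₀K : x₀ ∈ K := by
    by_contra hx₀K
    exact (hbd x₀ (hK.frontier_eq ▸ ⟨hx₀, hx₀K⟩)).not_gt hlt₀
  have hK₀ : K ∈ 𝓝 x₀ := hK.mem_nhds hx₀K
  exact (hQ x₀ hx₀K).not_gt <| Qop_lt_of_isLocalMax hε hσ (hu.contDiffAt hK₀) (hv.contDiffAt hK₀)
    (hmax.isLocalMax (Filter.mem_of_superset hK₀ subset_closure)) hlt₀

end Euclidean

theorem monotonicity_in_sigma_general {n : ℕ}
    (K : Set (EuclideanSpace ℝ (Fin n))) (hK : IsOpen K) (hKc : IsCompact (closure K))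
    (ε κ σ₁ σ₂ : ℝ) (hε : 0 < ε) (hκ : 0 ≤ κ) (hσ₁ : 0 < σ₁) (hσ : σ₁ ≤ σ₂)
    (u₁ u₂ : EuclideanSpace ℝ (Fin n) → ℝ)
    (hu₁2 : ContDiffOn ℝ 2 u₁ K) (hu₁c : ContinuousOn u₁ (closure K))
    (hu₂2 : ContDiffOn ℝ 2 u₂ K) (hu₂c : ContinuousOn u₂ (closure K))
    (hsol₁ : SolvesDirichlet ε σ₁ κ K u₁) (hsol₂ : SolvesDirichlet ε σ₂ κ K u₂) :
    ∀ x ∈ closure K, u₂ x ≤ u₁ x := by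
  have hu₂_nonneg : ∀ x ∈ closure K, 0 ≤ u₂ x :=
    le_on_closure_of_Qop_le hK hKc hε.ne' (hσ₁.trans_le hσ) hu₂2 contDiffOn_const hu₂c
      continuousOn_const (fun x hx => by rw [hsol₂.1 x hx, Qop_zero]; positivity)
      (fun x hx => (hsol₂.2 x hx).ge)
  refine le_on_closure_of_Qop_le (κ := κ) hK hKc hε.ne' hσ₁ hu₁2 hu₂2 hu₁c hu₂c (fun x hx => ?_)
    (fun x hx => by rw [hsol₁.2 x hx, hsol₂.2 x hx])
  rw [hsol₁.1 x hx, Qop_eq_Qop_add ε σ₁ σ₂, hsol₂.1 x hx, zero_add]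
  exact mul_nonneg (sub_nonneg.2 hσ) (hu₂_nonneg x (subset_closure hx))

/-- monotonicity of the double approximators in `σ`. -/
theorem monotonicity_in_sigma {n : ℕ} (hn : 1 ≤ n)
    (K : Set (EuclideanSpace ℝ (Fin n))) (hK : IsOpen K) (hKc : IsCompact (closure K))
    (ε κ σ₁ σ₂ : ℝ) (hε : 0 < ε) (hκ : 0 ≤ κ) (hσ₁ : 0 < σ₁) (hσ : σ₁ ≤ σ₂)
    (u₁ u₂ : EuclideanSpace ℝ (Fin n) → ℝ)
    (hu₁2 : ContDiffOn ℝ 2 u₁ K) (hu₁c : ContinuousOn u₁ (closure K))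
    (hu₂2 : ContDiffOn ℝ 2 u₂ K) (hu₂c : ContinuousOn u₂ (closure K))
    (hsol₁ : SolvesDirichlet ε σ₁ κ K u₁) (hsol₂ : SolvesDirichlet ε σ₂ κ K u₂) :
    ∀ x ∈ closure K, u₂ x ≤ u₁ x :=
  monotonicity_in_sigma_general K hK hKc ε κ σ₁ σ₂ hε hκ hσ₁ hσ u₁ u₂ hu₁2 hu₁c hu₂2 hu₂c hsol₁
    hsol₂
end

section
/- Norm of the symmetric traceless projection of X⊗A (combined computation in the proof of Proposition 4.3): for every n×n real symmetric matrix A and every unit vector X ∈ ℝⁿ, writing T = (X⊗A)^{sym}, one has |T − T^tr|² = (1/3)|A|² + (2/3)|AX|² − (1/(3(n+2))) |2AX + (tr A)X|². -/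
open scoped BigOperators

/-- A 3-tensor on ℝⁿ. -/
abbrev Tensor3 (n : ℕ) := Fin n → Fin n → Fin n → ℝ

/-- Inner product of 3-tensors: `⟨T,S⟩ = Σ_{i,j,k} T_{ijk} S_{ijk}`. -/
def tInner {n : ℕ} (T S : Tensor3 n) : ℝ := ∑ i, ∑ j, ∑ k, T i j k * S i j k

/-- Norm of a 3-tensor. -/
noncomputable def tNorm {n : ℕ} (T : Tensor3 n) : ℝ := Real.sqrt (tInner T T)

/-- A 3-tensor is totally symmetric if it is invariant under all permutations of indices. -/
def TotSym {n : ℕ} (T : Tensor3 n) : Prop :=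
  ∀ i j k, T i j k = T j i k ∧ T i j k = T i k j

/-- A 3-tensor is totally traceless if all three contractions vanish. -/
def TotTraceless {n : ℕ} (T : Tensor3 n) : Prop :=
  ∀ k, (∑ p, T p p k = 0) ∧ (∑ p, T p k p = 0) ∧ (∑ p, T k p p = 0)

/-- The trace vector `t_k = Σ_p T_{ppk}` of a 3-tensor. -/
def traceVec {n : ℕ} (T : Tensor3 n) (k : Fin n) : ℝ := ∑ p, T p p k

/-- The trace part `T^tr_{ijk} = (1/(n+2))(t_i δ_{jk} + t_j δ_{ik} + t_k δ_{ij})`. -/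
noncomputable def tracePart {n : ℕ} (T : Tensor3 n) : Tensor3 n := fun i j k =>
  (1 / ((n : ℝ) + 2)) * (traceVec T i * (if j = k then 1 else 0)
    + traceVec T j * (if i = k then 1 else 0)
    + traceVec T k * (if i = j then 1 else 0))

/-- The symmetrization `(X⊗A)^{sym}_{ijk} = (1/3)(X_i A_{jk} + X_j A_{ik} + X_k A_{ij})`. -/
noncomputable def symXA {n : ℕ} (X : Fin n → ℝ) (A : Matrix (Fin n) (Fin n) ℝ) : Tensor3 n := fun i j k =>
  (1 / 3) * (X i * A j k + X j * A i k + X k * A i j)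

/-! `T = (X⊗A)^{sym}` is totally symmetric, and for a totally symmetric tensor the trace part is
an orthogonal projection, so `|T - T^tr|² = |T|² - |T^tr|² = |T|² - (3/(n+2)) |t|²`. The trace
vector is `t = (2AX + (tr A)X)/3`. Finally, by the symmetry of `T`, `|T|² = ⟨T, X⊗A⟩`, which
expands to `(|X|²|A|² + 2|AX|²)/3` since `A` is symmetric. -/

lemma tInner_sub_self {n : ℕ} (T S : Tensor3 n) :
    tInner (T - S) (T - S) = tInner T T - 2 * tInner T S + tInner S S := by
  simp only [tInner, Pi.sub_apply, Finset.mul_sum, ← Finset.sum_sub_distrib,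
    ← Finset.sum_add_distrib]
  exact Finset.sum_congr rfl fun _ _ => Finset.sum_congr rfl fun _ _ =>
    Finset.sum_congr rfl fun _ _ => by ring

namespace TotSym

variable {n : ℕ} {T : Tensor3 n}

lemma sum_left (hT : TotSym T) (k : Fin n) : ∑ p, T k p p = traceVec T k :=
  Finset.sum_congr rfl fun p _ => (hT k p p).1.trans (hT p k p).2

lemma sum_middle (hT : TotSym T) (k : Fin n) : ∑ p, T p k p = traceVec T k :=
  Finset.sum_congr rfl fun p _ => (hT p k p).2

lemma tInner_symXA (hT : TotSym T) (X : Fin n → ℝ) (A : Matrix (Fin n) (Fin n) ℝ) :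
    tInner T (symXA X A) = ∑ i, ∑ j, ∑ k, T i j k * (X i * A j k) := by
  have h_swap : ∑ i, ∑ j, ∑ k, T i j k * (X j * A i k) =
      ∑ i, ∑ j, ∑ k, T i j k * (X i * A j k) := by
    rw [Finset.sum_comm]
    simp only [← (hT _ _ _).1]
  have h_cycle : ∑ i, ∑ j, ∑ k, T i j k * (X k * A i j) =
      ∑ i, ∑ j, ∑ k, T i j k * (X i * A j k) := by
    conv_lhs => enter [2, i]; rw [Finset.sum_comm]
    rw [Finset.sum_comm]
    simp only [(hT _ _ _).1, (hT _ _ _).2]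
  simp only [tInner, symXA, mul_add, Finset.sum_add_distrib, mul_left_comm (T _ _ _) (1 / 3),
    ← Finset.mul_sum, h_swap, h_cycle]
  ring

end TotSym

lemma totSym_tracePart {n : ℕ} (T : Tensor3 n) : TotSym (tracePart T) := by
  intro i j k
  constructor <;> simp only [tracePart] <;> split_ifs <;> grind

lemma traceVec_tracePart {n : ℕ} (T : Tensor3 n) : traceVec (tracePart T) = traceVec T := by
  ext k
  have hn : (n : ℝ) + 2 ≠ 0 := by positivity
  simp only [traceVec, tracePart, mul_ite, mul_one, mul_zero, Finset.sum_add_distrib,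
    Finset.sum_ite_eq', Finset.mem_univ, if_true, ← Finset.mul_sum, Finset.sum_const,
    Finset.card_univ, Fintype.card_fin, nsmul_eq_mul]
  field_simp
  ring

lemma tInner_tracePart {n : ℕ} {S : Tensor3 n} (hS : TotSym S) (T : Tensor3 n) :
    tInner S (tracePart T) = 3 / ((n : ℝ) + 2) * ∑ k, traceVec S k * traceVec T k := by
  simp only [tInner, tracePart, mul_ite, mul_one, mul_zero, mul_add, Finset.sum_ite_irrel,
    Finset.sum_const_zero, Finset.sum_add_distrib, Finset.sum_ite_eq, Finset.mem_univ, if_true]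
  rw [Finset.sum_comm (f := fun x y => S x y x * _), Finset.sum_comm (f := fun x y => S x x y * _)]
  simp only [← Finset.sum_mul, hS.sum_left, hS.sum_middle, ← traceVec.eq_1, Finset.mul_sum,
    ← Finset.sum_add_distrib]
  exact Finset.sum_congr rfl fun k _ => by ring

lemma tInner_sub_tracePart_self {n : ℕ} {T : Tensor3 n} (hT : TotSym T) :
    tInner (T - tracePart T) (T - tracePart T) =
      tInner T T - 3 / ((n : ℝ) + 2) * ∑ k, traceVec T k ^ 2 := by
  rw [tInner_sub_self, tInner_tracePart hT, tInner_tracePart (totSym_tracePart T),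
    traceVec_tracePart]
  simp only [sq]
  ring

lemma Matrix.IsSymm.sum_mul_apply_eq_mulVec {m α : Type*} [Fintype m] [CommSemiring α]
    {A : Matrix m m α} (hA : A.IsSymm) (X : m → α) (k : m) : ∑ p, X p * A p k = A.mulVec X k := by
  rw [← Matrix.vecMul_transpose, hA.eq]
  rfl

section symXA

variable {n : ℕ} (X : Fin n → ℝ) {A : Matrix (Fin n) (Fin n) ℝ}

lemma totSym_symXA (hA : A.IsSymm) : TotSym (symXA X A) := by
  intro i j k
  constructor <;>
  · simp only [symXA, ← hA.apply i j, ← hA.apply i k, ← hA.apply j k]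
    ring

lemma traceVec_symXA (hA : A.IsSymm) (k : Fin n) :
    traceVec (symXA X A) k = 1 / 3 * (2 * A.mulVec X k + A.trace * X k) := by
  simp only [traceVec, symXA, ← Finset.mul_sum, Finset.sum_add_distrib,
    hA.sum_mul_apply_eq_mulVec, Matrix.trace, Matrix.diag]
  ring

lemma tInner_symXA_self (hA : A.IsSymm) :
    tInner (symXA X A) (symXA X A) =
      1 / 3 * ((∑ i, X i ^ 2) * ∑ i, ∑ j, A i j ^ 2) + 2 / 3 * ∑ k, A.mulVec X k ^ 2 := by
  rw [(totSym_symXA X hA).tInner_symXA]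
  simp only [symXA, mul_assoc (1 / 3 : ℝ), ← Finset.mul_sum, add_mul, Finset.sum_add_distrib]
  have h_sq : ∑ i, ∑ j, ∑ k, X i * A j k * (X i * A j k) =
      (∑ i, X i ^ 2) * ∑ i, ∑ j, A i j ^ 2 := by
    rw [Finset.sum_mul]
    simp only [Finset.mul_sum]
    exact Finset.sum_congr rfl fun i _ => Finset.sum_congr rfl fun j _ =>
      Finset.sum_congr rfl fun k _ => by ring
  have h_cross₁ : ∑ i, ∑ j, ∑ k, X j * A i k * (X i * A j k) = ∑ k, A.mulVec X k ^ 2 := by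
    conv_lhs => enter [2, i]; rw [Finset.sum_comm]
    rw [Finset.sum_comm]
    simp only [sq, ← hA.sum_mul_apply_eq_mulVec, Finset.sum_mul_sum]
    exact Finset.sum_congr rfl fun k _ => Finset.sum_congr rfl fun i _ =>
      Finset.sum_congr rfl fun j _ => by ring
  have h_cross₂ : ∑ i, ∑ j, ∑ k, X k * A i j * (X i * A j k) = ∑ k, A.mulVec X k ^ 2 := by
    rw [Finset.sum_comm]
    refine Finset.sum_congr rfl fun j _ => ?_
    rw [sq]
    nth_rw 1 [← hA.sum_mul_apply_eq_mulVec]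
    simp only [Matrix.mulVec, dotProduct, Finset.sum_mul_sum]
    exact Finset.sum_congr rfl fun i _ => Finset.sum_congr rfl fun k _ => by ring
  rw [h_sq, h_cross₁, h_cross₂]
  ring

end symXA

/-- norm of the symmetric traceless projection of `X⊗A`:
`|T − T^tr|² = (1/3)|A|² + (2/3)|AX|² − (1/(3(n+2)))|2AX + (tr A)X|²`. -/
theorem norm_sq_traceless_projection_symXA {n : ℕ}
    (A : Matrix (Fin n) (Fin n) ℝ) (hA : A.IsSymm)
    (X : Fin n → ℝ) (hX : ∑ i, X i ^ 2 = 1) :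
    tInner (symXA X A - tracePart (symXA X A)) (symXA X A - tracePart (symXA X A)) =
      (1 / 3) * (∑ i, ∑ j, A i j ^ 2) + (2 / 3) * (∑ k, (A.mulVec X k) ^ 2)
        - (1 / (3 * ((n : ℝ) + 2))) * ∑ k, (2 * A.mulVec X k + Matrix.trace A * X k) ^ 2 := by
  rw [tInner_sub_tracePart_self (totSym_symXA X hA), tInner_symXA_self X hA, hX]
  simp only [traceVec_symXA X hA, mul_pow, ← Finset.mul_sum]
  have hn : (n : ℝ) + 2 ≠ 0 := by positivity
  field_simp
end
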